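/- Let l > 0 and R_{2l} := (0, 2l) × (−1, 1). Let h_n, h : [0, 2l] → [−1, 1] be convex with h_n(w₁) = h_n(2l − w₁) and h(w₁) = h(2l − w₁) for all w₁, and suppose h_n → h uniformly on compact subsets of (0, 2l). Let ψ_n, ψ : R_{2l} → [0, 1] be measurable with ψ_n → ψ in L¹(R_{2l}), and suppose that for every n, ψ_n = 0 a.e. on {(w₁, w₂) ∈ R_{2l} : w₂ > h_n(w₁)}. Then ψ = 0 a.e. on {(w₁, w₂) ∈ R_{2l} : w₂ > h(w₁)}. -/
import Mathlib


open MeasureTheory Filter Topology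
open scoped ENNReal

noncomputable section

/-- The doubled rectangle `R_{2l} = (0, 2l) × (−1, 1)`. -/
def R2l (l : ℝ) : Set (ℝ × ℝ) := Set.Ioo 0 (2 * l) ×ˢ Set.Ioo (-1 : ℝ) 1

lemma R2l_open (l : ℝ) : IsOpen (R2l l) := isOpen_Ioo.prod isOpen_Ioo

lemma graph_region_open (l : ℝ) (f : ℝ → ℝ)
    (hf : ConvexOn ℝ (Set.Icc 0 (2 * l)) f) :
    IsOpen {w : ℝ × ℝ | w ∈ R2l l ∧ f w.1 < w.2} := by
  have hfc : ContinuousOn f (Set.Ioo 0 (2 * l)) :=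
    ConvexOn.continuousOn isOpen_Ioo (hf.subset Set.Ioo_subset_Icc_self (convex_Ioo _ _))
  have hg : ContinuousOn (fun w : ℝ × ℝ => w.2 - f w.1) (R2l l) :=
    continuous_snd.continuousOn.sub
      (hfc.comp continuous_fst.continuousOn fun w hw => hw.1)
  have h2 := hg.isOpen_inter_preimage (t := Set.Ioi (0:ℝ)) (R2l_open l) isOpen_Ioi
  convert h2 using 1
  ext w
  simp only [Set.mem_setOf_eq, Set.mem_inter_iff, Set.mem_preimage, Set.mem_Ioi, sub_pos]

lemma volume_R2l_lt_top (l : ℝ) : volume (R2l l) < ⊤ := by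
  rw [R2l, Measure.volume_eq_prod, Measure.prod_prod, Real.volume_Ioo, Real.volume_Ioo]
  exact ENNReal.mul_lt_top ENNReal.ofReal_lt_top ENNReal.ofReal_lt_top

lemma integrableOn_of_bdd {f : ℝ × ℝ → ℝ} {s : Set (ℝ × ℝ)} {C : ℝ}
    (hf : Measurable f) (hs : MeasurableSet s) (hvol : volume s < ⊤)
    (hbd : ∀ w ∈ s, |f w| ≤ C) : IntegrableOn f s := by
  have : IsFiniteMeasure (volume.restrict s) :=
    ⟨by rwa [Measure.restrict_apply_univ]⟩
  exact (integrable_const C).mono' hf.aestronglyMeasurable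
    (ae_restrict_of_forall_mem hs fun w hw => by simpa using hbd w hw)

/-- Closedness of the admissible class: if `h_n → h` locally uniformly on `(0, 2l)`,
`ψ_n → ψ` in `L¹(R_{2l})`, and each `ψ_n` vanishes a.e. above the graph of `h_n`, then
`ψ` vanishes a.e. above the graph of `h`. -/
theorem closedness_of_admissible (l : ℝ) (hl : 0 < l)
    (hn : ℕ → ℝ → ℝ) (h : ℝ → ℝ)
    (hconvn : ∀ n, ConvexOn ℝ (Set.Icc 0 (2 * l)) (hn n))
    (hmemn : ∀ n, ∀ w ∈ Set.Icc (0 : ℝ) (2 * l), hn n w ∈ Set.Icc (-1 : ℝ) 1)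
    (hsymn : ∀ n, ∀ w ∈ Set.Icc (0 : ℝ) (2 * l), hn n w = hn n (2 * l - w))
    (hconv : ConvexOn ℝ (Set.Icc 0 (2 * l)) h)
    (hmem : ∀ w ∈ Set.Icc (0 : ℝ) (2 * l), h w ∈ Set.Icc (-1 : ℝ) 1)
    (hsym : ∀ w ∈ Set.Icc (0 : ℝ) (2 * l), h w = h (2 * l - w))
    (hunif : ∀ Kc : Set ℝ, Kc ⊆ Set.Ioo 0 (2 * l) → IsCompact Kc →
      TendstoUniformlyOn hn h atTop Kc)
    (ψn : ℕ → ℝ × ℝ → ℝ) (ψ : ℝ × ℝ → ℝ)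
    (hψnmeas : ∀ n, Measurable (ψn n)) (hψmeas : Measurable ψ)
    (hψnmem : ∀ n, ∀ w ∈ R2l l, ψn n w ∈ Set.Icc (0 : ℝ) 1)
    (hψmem : ∀ w ∈ R2l l, ψ w ∈ Set.Icc (0 : ℝ) 1)
    (hL1 : Tendsto (fun n => ∫ w in R2l l, |ψn n w - ψ w|) atTop (𝓝 0))
    (hzero : ∀ n, ∀ᵐ w ∂(volume.restrict {w : ℝ × ℝ | w ∈ R2l l ∧ hn n w.1 < w.2}),
      ψn n w = 0) :
    ∀ᵐ w ∂(volume.restrict {w : ℝ × ℝ | w ∈ R2l l ∧ h w.1 < w.2}), ψ w = 0 := by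
  set K : Set (ℝ × ℝ) := {w : ℝ × ℝ | w ∈ R2l l ∧ h w.1 < w.2} with hKdef
  have hKopen : IsOpen K := graph_region_open l h hconv
  have hKmeas : MeasurableSet K := hKopen.measurableSet
  have hKsub : K ⊆ R2l l := fun w hw => hw.1
  have hKvol : volume K < ⊤ := lt_of_le_of_lt (measure_mono hKsub) (volume_R2l_lt_top l)
  -- the bad sets
  set A : ℕ → Set (ℝ × ℝ) := fun n => {w : ℝ × ℝ | w ∈ R2l l ∧ hn n w.1 < w.2} with hAdef
  have hAmeas : ∀ n, MeasurableSet (A n) :=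
    fun n => (graph_region_open l (hn n) (hconvn n)).measurableSet
  set B : ℕ → Set (ℝ × ℝ) := fun n => K \ A n with hBdef
  have hBmeas : ∀ n, MeasurableSet (B n) := fun n => hKmeas.diff (hAmeas n)
  set g : ℕ → ℝ × ℝ → ℝ := fun n => (B n).indicator (fun _ => (1 : ℝ)) with hgdef
  have hgmeas : ∀ n, Measurable (g n) :=
    fun n => measurable_const.indicator (hBmeas n)
  -- pointwise convergence of h_n on the open interval
  have hpt : ∀ x ∈ Set.Ioo (0 : ℝ) (2 * l),
      Tendsto (fun n => hn n x) atTop (𝓝 (h x)) := fun x hx =>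
    (hunif {x} (by simpa using hx) isCompact_singleton).tendsto_at rfl
  -- dominated convergence: ∫_K g n → 0
  have hgtend : Tendsto (fun n => ∫ w in K, g n w) atTop (𝓝 0) := by
    have h0 : (0 : ℝ) = ∫ w in K, (0 : ℝ) := by simp
    rw [h0]
    apply tendsto_integral_of_dominated_convergence (fun _ => (1 : ℝ))
      (fun n => (hgmeas n).aestronglyMeasurable)
    · exact integrableOn_of_bdd (C := 1) measurable_const hKmeas hKvol (fun w _ => by simp)
    · intro n
      refine ae_of_all _ fun w => ?_
      by_cases hw : w ∈ B n <;> simp [hgdef, hw]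
    · refine ae_restrict_of_forall_mem hKmeas fun w hw => ?_
      have h1 : Tendsto (fun n => hn n w.1) atTop (𝓝 (h w.1)) := hpt w.1 hw.1.1
      have h2 : ∀ᶠ n in atTop, hn n w.1 < w.2 :=
        h1.eventually_lt_const hw.2
      refine Tendsto.congr' ?_ tendsto_const_nhds
      filter_upwards [h2] with n hn2
      have : w ∉ B n := fun hwB => hwB.2 ⟨hw.1, hn2⟩
      simp [hgdef, this]
  -- integrabilities
  have hψint : IntegrableOn ψ K :=
    integrableOn_of_bdd hψmeas hKmeas hKvol fun w hw =>
      abs_le.mpr ⟨by linarith [(hψmem w (hKsub hw)).1], (hψmem w (hKsub hw)).2⟩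
  have hψnint : ∀ n, IntegrableOn (ψn n) K := fun n =>
    integrableOn_of_bdd (hψnmeas n) hKmeas hKvol fun w hw =>
      abs_le.mpr ⟨by linarith [(hψnmem n w (hKsub hw)).1], (hψnmem n w (hKsub hw)).2⟩
  have hgint : ∀ n, IntegrableOn (g n) K := fun n =>
    integrableOn_of_bdd (C := 1) (hgmeas n) hKmeas hKvol fun w _ => by
      by_cases hw : w ∈ B n <;> simp [hgdef, hw]
  have hdiffint : ∀ n, IntegrableOn (fun w => |ψn n w - ψ w|) (R2l l) := fun n =>
    integrableOn_of_bdd (C := 2) ((hψnmeas n).sub hψmeas).abs (R2l_open l).measurableSet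
      (volume_R2l_lt_top l) fun w hw => by
        have h1 := hψnmem n w hw
        have h2 := hψmem w hw
        rw [abs_abs]
        refine abs_le.mpr ⟨by linarith [h1.1, h2.2], by linarith [h1.2, h2.1]⟩
  -- key inequality
  have hkey : ∀ n, ∫ w in K, ψ w ≤ (∫ w in R2l l, |ψn n w - ψ w|) + ∫ w in K, g n w := by
    intro n
    have step1 : (∫ w in K, ψ w) - ∫ w in K, ψn n w ≤ ∫ w in K, |ψn n w - ψ w| := by
      rw [← integral_sub hψint (hψnint n)]
      refine integral_mono (hψint.sub (hψnint n)) ((hdiffint n).mono_set hKsub)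
        fun w => ?_
      rw [abs_sub_comm]
      exact le_abs_self _
    have step2 : ∫ w in K, |ψn n w - ψ w| ≤ ∫ w in R2l l, |ψn n w - ψ w| :=
      setIntegral_mono_set (hdiffint n)
        (ae_of_all _ fun w => abs_nonneg _) (HasSubset.Subset.eventuallyLE hKsub)
    have step3 : ∫ w in K, ψn n w ≤ ∫ w in K, g n w := by
      refine integral_mono_ae (hψnint n) (hgint n) ?_
      have hz := (ae_restrict_iff' (hAmeas n)).mp (hzero n)
      rw [EventuallyLE, ae_restrict_iff' hKmeas]
      filter_upwards [hz] with w hw hwK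
      by_cases hcase : hn n w.1 < w.2
      · have : ψn n w = 0 := hw ⟨hKsub hwK, hcase⟩
        rw [this]
        by_cases hb : w ∈ B n <;> simp [hgdef, hb]
      · have hb : w ∈ B n := ⟨hwK, fun hA => hcase hA.2⟩
        simp only [hgdef, Set.indicator_of_mem hb]
        exact (hψnmem n w (hKsub hwK)).2
    linarith
  -- conclude ∫_K ψ = 0
  have hsum : Tendsto (fun n => (∫ w in R2l l, |ψn n w - ψ w|) + ∫ w in K, g n w)
      atTop (𝓝 0) := by
    simpa using hL1.add hgtend
  have hle0 : ∫ w in K, ψ w ≤ 0 := ge_of_tendsto' hsum hkey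
  have hnonneg : 0 ≤ᵐ[volume.restrict K] ψ :=
    ae_restrict_of_forall_mem hKmeas fun w hw => (hψmem w (hKsub hw)).1
  have hge0 : 0 ≤ ∫ w in K, ψ w := integral_nonneg_of_ae hnonneg
  have heq0 : ∫ w in K, ψ w = 0 := le_antisymm hle0 hge0
  have := (integral_eq_zero_iff_of_nonneg_ae hnonneg hψint).mp heq0
  filter_upwards [this] with w hw using hw
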